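/- arXiv:math/0309365 — 4 statements merged into one kernel-verified Lean document; each statement's English description precedes it below -/
import Mathlib

section
/- For f, g ∈ L^p(μ) with 0 < p < ∞, p ≠ 2, the Clarkson equality ‖f+g‖_p^p + ‖f-g‖_p^p = 2(‖f‖_p^p + ‖g‖_p^p) holds if and only if f·g = 0 almost everywhere. -/
/-!
Write `q = p / 2`, so that `‖a ± b‖ ^ p = (‖a ± b‖ ^ 2) ^ q`; by the parallelogram law the mean of
`‖a + b‖ ^ 2` and `‖a - b‖ ^ 2` is `‖a‖ ^ 2 + ‖b‖ ^ 2`. For `p < 2` the map `t ↦ t ^ q` is concave and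
strictly subadditive on positive reals, hence
`‖a + b‖ ^ p + ‖a - b‖ ^ p ≤ 2 * (‖a‖ ^ 2 + ‖b‖ ^ 2) ^ q ≤ 2 * (‖a‖ ^ p + ‖b‖ ^ p)`,
the last inequality being strict unless `a = 0` or `b = 0`, where equality holds. For `p > 2` every
inequality reverses. Applied to `f ω, g ω`, the Clarkson equality compares the integrals of two
pointwise ordered functions with finite integrals, so it holds iff they agree almost everywhere,
i.e. iff `f ω = 0 ∨ g ω = 0` almost everywhere.
-/

open MeasureTheory ENNReal

namespace Real

variable {q x y : ℝ}

lemma self_mul_rpow_sub_one (hx : 0 < x) (q : ℝ) : x * x ^ (q - 1) = x ^ q := by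
  rw [rpow_sub_one hx.ne', mul_div_cancel₀ _ hx.ne']

lemma rpow_eq_sq_rpow_half (hx : 0 ≤ x) (q : ℝ) : x ^ q = (x ^ 2) ^ (q / 2) := by
  rw [← rpow_natCast_mul hx]
  ring_nf

lemma rpow_add_lt_add_rpow (hq1 : q < 1) (hx : 0 < x) (hy : 0 < y) :
    (x + y) ^ q < x ^ q + y ^ q := by
  have hx' : (x + y) ^ (q - 1) < x ^ (q - 1) := rpow_lt_rpow_of_neg hx (by linarith) (by linarith)
  have hy' : (x + y) ^ (q - 1) < y ^ (q - 1) := rpow_lt_rpow_of_neg hy (by linarith) (by linarith)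
  calc (x + y) ^ q = x * (x + y) ^ (q - 1) + y * (x + y) ^ (q - 1) := by
        rw [← add_mul, self_mul_rpow_sub_one (by linarith)]
    _ < x * x ^ (q - 1) + y * y ^ (q - 1) := by gcongr
    _ = x ^ q + y ^ q := by rw [self_mul_rpow_sub_one hx, self_mul_rpow_sub_one hy]

lemma add_rpow_lt_rpow_add (hq1 : 1 < q) (hx : 0 < x) (hy : 0 < y) :
    x ^ q + y ^ q < (x + y) ^ q := by
  have hx' : x ^ (q - 1) < (x + y) ^ (q - 1) := rpow_lt_rpow hx.le (by linarith) (by linarith)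
  have hy' : y ^ (q - 1) < (x + y) ^ (q - 1) := rpow_lt_rpow hy.le (by linarith) (by linarith)
  calc x ^ q + y ^ q = x * x ^ (q - 1) + y * y ^ (q - 1) := by
        rw [self_mul_rpow_sub_one hx, self_mul_rpow_sub_one hy]
    _ < x * (x + y) ^ (q - 1) + y * (x + y) ^ (q - 1) := by gcongr
    _ = (x + y) ^ q := by rw [← add_mul, self_mul_rpow_sub_one (by linarith)]

end Real

section Clarkson

variable {E : Type*} [NormedAddCommGroup E] {p : ℝ}

lemma ofReal_norm_rpow (hp : 0 ≤ p) (a : E) : ENNReal.ofReal (‖a‖ ^ p) = ‖a‖ₑ ^ p := by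
  rw [← ofReal_norm, ENNReal.ofReal_rpow_of_nonneg (norm_nonneg a) hp]

lemma enorm_add_rpow_add_enorm_sub_rpow_eq_ofReal (hp : 0 ≤ p) (a b : E) :
    ‖a + b‖ₑ ^ p + ‖a - b‖ₑ ^ p = ENNReal.ofReal (‖a + b‖ ^ p + ‖a - b‖ ^ p) := by
  rw [ENNReal.ofReal_add (by positivity) (by positivity), ofReal_norm_rpow hp, ofReal_norm_rpow hp]

lemma two_mul_enorm_rpow_add_enorm_rpow_eq_ofReal (hp : 0 ≤ p) (a b : E) :
    2 * (‖a‖ₑ ^ p + ‖b‖ₑ ^ p) = ENNReal.ofReal (2 * (‖a‖ ^ p + ‖b‖ ^ p)) := by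
  rw [ENNReal.ofReal_mul zero_le_two, ENNReal.ofReal_add (by positivity) (by positivity),
    ofReal_norm_rpow hp, ofReal_norm_rpow hp, ENNReal.ofReal_ofNat]

variable [InnerProductSpace ℝ E]

lemma norm_add_rpow_add_norm_sub_rpow_le_two_mul_sq_add_sq_rpow (hp0 : 0 ≤ p) (hp2 : p ≤ 2)
    (a b : E) : ‖a + b‖ ^ p + ‖a - b‖ ^ p ≤ 2 * (‖a‖ ^ 2 + ‖b‖ ^ 2) ^ (p / 2) := by
  have h := (Real.concaveOn_rpow (p := p / 2) (by positivity) (by linarith)).2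
    (sq_nonneg ‖a + b‖) (sq_nonneg ‖a - b‖) (by norm_num : (0 : ℝ) ≤ 1 / 2)
    (by norm_num : (0 : ℝ) ≤ 1 / 2) (by norm_num)
  have hmean : (1 / 2 : ℝ) • ‖a + b‖ ^ 2 + (1 / 2 : ℝ) • ‖a - b‖ ^ 2 = ‖a‖ ^ 2 + ‖b‖ ^ 2 := by
    simp only [smul_eq_mul]; linarith [parallelogram_law_with_norm ℝ a b]
  rw [hmean, smul_eq_mul, smul_eq_mul] at h
  rw [Real.rpow_eq_sq_rpow_half (norm_nonneg (a + b)),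
    Real.rpow_eq_sq_rpow_half (norm_nonneg (a - b))]
  linarith

lemma two_mul_sq_add_sq_rpow_le_norm_add_rpow_add_norm_sub_rpow (hp2 : 2 ≤ p) (a b : E) :
    2 * (‖a‖ ^ 2 + ‖b‖ ^ 2) ^ (p / 2) ≤ ‖a + b‖ ^ p + ‖a - b‖ ^ p := by
  have h := (convexOn_rpow (p := p / 2) (by linarith)).2
    (sq_nonneg ‖a + b‖) (sq_nonneg ‖a - b‖) (by norm_num : (0 : ℝ) ≤ 1 / 2)
    (by norm_num : (0 : ℝ) ≤ 1 / 2) (by norm_num)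
  have hmean : (1 / 2 : ℝ) • ‖a + b‖ ^ 2 + (1 / 2 : ℝ) • ‖a - b‖ ^ 2 = ‖a‖ ^ 2 + ‖b‖ ^ 2 := by
    simp only [smul_eq_mul]; linarith [parallelogram_law_with_norm ℝ a b]
  rw [hmean, smul_eq_mul, smul_eq_mul] at h
  rw [Real.rpow_eq_sq_rpow_half (norm_nonneg (a + b)),
    Real.rpow_eq_sq_rpow_half (norm_nonneg (a - b))]
  linarith

lemma norm_add_rpow_add_norm_sub_rpow_le (hp0 : 0 ≤ p) (hp2 : p ≤ 2) (a b : E) :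
    ‖a + b‖ ^ p + ‖a - b‖ ^ p ≤ 2 * (‖a‖ ^ p + ‖b‖ ^ p) := by
  refine (norm_add_rpow_add_norm_sub_rpow_le_two_mul_sq_add_sq_rpow hp0 hp2 a b).trans ?_
  rw [Real.rpow_eq_sq_rpow_half (norm_nonneg a), Real.rpow_eq_sq_rpow_half (norm_nonneg b)]
  gcongr
  exact Real.rpow_add_le_add_rpow (sq_nonneg _) (sq_nonneg _) (by positivity) (by linarith)

lemma norm_add_rpow_add_norm_sub_rpow_lt (hp0 : 0 ≤ p) (hp2 : p < 2) {a b : E} (ha : a ≠ 0)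
    (hb : b ≠ 0) : ‖a + b‖ ^ p + ‖a - b‖ ^ p < 2 * (‖a‖ ^ p + ‖b‖ ^ p) := by
  refine (norm_add_rpow_add_norm_sub_rpow_le_two_mul_sq_add_sq_rpow hp0 hp2.le a b).trans_lt ?_
  rw [Real.rpow_eq_sq_rpow_half (norm_nonneg a), Real.rpow_eq_sq_rpow_half (norm_nonneg b)]
  gcongr
  exact Real.rpow_add_lt_add_rpow (by linarith) (by positivity) (by positivity)

lemma le_norm_add_rpow_add_norm_sub_rpow (hp2 : 2 ≤ p) (a b : E) :
    2 * (‖a‖ ^ p + ‖b‖ ^ p) ≤ ‖a + b‖ ^ p + ‖a - b‖ ^ p := by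
  refine le_trans ?_ (two_mul_sq_add_sq_rpow_le_norm_add_rpow_add_norm_sub_rpow hp2 a b)
  rw [Real.rpow_eq_sq_rpow_half (norm_nonneg a), Real.rpow_eq_sq_rpow_half (norm_nonneg b)]
  gcongr
  exact Real.add_rpow_le_rpow_add (sq_nonneg _) (sq_nonneg _) (by linarith)

lemma lt_norm_add_rpow_add_norm_sub_rpow (hp2 : 2 < p) {a b : E} (ha : a ≠ 0) (hb : b ≠ 0) :
    2 * (‖a‖ ^ p + ‖b‖ ^ p) < ‖a + b‖ ^ p + ‖a - b‖ ^ p := by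
  refine lt_of_lt_of_le ?_ (two_mul_sq_add_sq_rpow_le_norm_add_rpow_add_norm_sub_rpow hp2.le a b)
  rw [Real.rpow_eq_sq_rpow_half (norm_nonneg a), Real.rpow_eq_sq_rpow_half (norm_nonneg b)]
  gcongr
  exact Real.add_rpow_lt_rpow_add (by linarith) (by positivity) (by positivity)

lemma norm_add_rpow_add_norm_sub_rpow_eq_iff (hp0 : 0 < p) (hp2 : p ≠ 2) (a b : E) :
    ‖a + b‖ ^ p + ‖a - b‖ ^ p = 2 * (‖a‖ ^ p + ‖b‖ ^ p) ↔ a = 0 ∨ b = 0 := by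
  refine ⟨fun h => ?_, ?_⟩
  · by_contra! hab
    rcases hp2.lt_or_gt with hlt | hgt
    · exact (norm_add_rpow_add_norm_sub_rpow_lt hp0.le hlt hab.1 hab.2).ne h
    · exact (lt_norm_add_rpow_add_norm_sub_rpow hgt hab.1 hab.2).ne' h
  · rintro (rfl | rfl) <;> simp [Real.zero_rpow hp0.ne'] <;> ring

lemma enorm_add_rpow_add_enorm_sub_rpow_le (hp0 : 0 ≤ p) (hp2 : p ≤ 2) (a b : E) :
    ‖a + b‖ₑ ^ p + ‖a - b‖ₑ ^ p ≤ 2 * (‖a‖ₑ ^ p + ‖b‖ₑ ^ p) := by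
  rw [enorm_add_rpow_add_enorm_sub_rpow_eq_ofReal hp0,
    two_mul_enorm_rpow_add_enorm_rpow_eq_ofReal hp0]
  exact ENNReal.ofReal_le_ofReal (norm_add_rpow_add_norm_sub_rpow_le hp0 hp2 a b)

lemma le_enorm_add_rpow_add_enorm_sub_rpow (hp2 : 2 ≤ p) (a b : E) :
    2 * (‖a‖ₑ ^ p + ‖b‖ₑ ^ p) ≤ ‖a + b‖ₑ ^ p + ‖a - b‖ₑ ^ p := by
  have hp0 : 0 ≤ p := by linarith
  rw [enorm_add_rpow_add_enorm_sub_rpow_eq_ofReal hp0,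
    two_mul_enorm_rpow_add_enorm_rpow_eq_ofReal hp0]
  exact ENNReal.ofReal_le_ofReal (le_norm_add_rpow_add_norm_sub_rpow hp2 a b)

lemma enorm_add_rpow_add_enorm_sub_rpow_eq_iff (hp0 : 0 < p) (hp2 : p ≠ 2) (a b : E) :
    ‖a + b‖ₑ ^ p + ‖a - b‖ₑ ^ p = 2 * (‖a‖ₑ ^ p + ‖b‖ₑ ^ p) ↔ a = 0 ∨ b = 0 := by
  rw [enorm_add_rpow_add_enorm_sub_rpow_eq_ofReal hp0.le,
    two_mul_enorm_rpow_add_enorm_rpow_eq_ofReal hp0.le,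
    ENNReal.ofReal_eq_ofReal_iff (by positivity) (by positivity)]
  exact norm_add_rpow_add_norm_sub_rpow_eq_iff hp0 hp2 a b

end Clarkson

namespace MeasureTheory

variable {Ω : Type*} [MeasurableSpace Ω] {μ : Measure Ω}

lemma lintegral_eq_lintegral_iff_ae_eq_of_le {P Q : Ω → ℝ≥0∞} (hPQ : ∀ ω, P ω ≤ Q ω)
    (hP : ∫⁻ ω, P ω ∂μ ≠ ∞) (hQ : AEMeasurable Q μ) :
    ∫⁻ ω, P ω ∂μ = ∫⁻ ω, Q ω ∂μ ↔ P =ᵐ[μ] Q :=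
  ⟨fun h => ae_eq_of_ae_le_of_lintegral_le (ae_of_all _ hPQ) hP hQ h.ge, lintegral_congr_ae⟩

variable {E : Type*} [NormedAddCommGroup E] {p : ℝ≥0∞}

lemma eLpNorm_rpow_toReal_eq_lintegral (hp0 : p ≠ 0) (hp_top : p ≠ ∞) (f : Ω → E) :
    eLpNorm f p μ ^ p.toReal = ∫⁻ ω, ‖f ω‖ₑ ^ p.toReal ∂μ := by
  rw [eLpNorm_eq_lintegral_rpow_enorm_toReal hp0 hp_top, ← ENNReal.rpow_mul, one_div,
    inv_mul_cancel₀ (ENNReal.toReal_pos hp0 hp_top).ne', ENNReal.rpow_one]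

theorem eLpNorm_add_rpow_add_eLpNorm_sub_rpow_eq_iff [InnerProductSpace ℝ E] (hp0 : p ≠ 0)
    (hp_top : p ≠ ∞) (hp2 : p.toReal ≠ 2) {f g : Ω → E} (hf : MemLp f p μ) (hg : MemLp g p μ) :
    eLpNorm (f + g) p μ ^ p.toReal + eLpNorm (f - g) p μ ^ p.toReal
      = 2 * (eLpNorm f p μ ^ p.toReal + eLpNorm g p μ ^ p.toReal)
    ↔ ∀ᵐ ω ∂μ, f ω = 0 ∨ g ω = 0 := by
  set r := p.toReal
  have hr : 0 < r := ENNReal.toReal_pos hp0 hp_top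
  have hmeas {h : Ω → E} (hh : MemLp h p μ) : AEMeasurable (fun ω => ‖h ω‖ₑ ^ r) μ :=
    hh.aestronglyMeasurable.enorm.pow_const r
  have hfin {h : Ω → E} (hh : MemLp h p μ) : eLpNorm h p μ ^ r ≠ ∞ :=
    ENNReal.rpow_ne_top_of_nonneg hr.le hh.eLpNorm_ne_top
  have hL : eLpNorm (f + g) p μ ^ r + eLpNorm (f - g) p μ ^ r
      = ∫⁻ ω, ‖f ω + g ω‖ₑ ^ r + ‖f ω - g ω‖ₑ ^ r ∂μ := by
    rw [eLpNorm_rpow_toReal_eq_lintegral hp0 hp_top, eLpNorm_rpow_toReal_eq_lintegral hp0 hp_top]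
    exact (lintegral_add_left' (hmeas (hf.add hg)) _).symm
  have hR : 2 * (eLpNorm f p μ ^ r + eLpNorm g p μ ^ r)
      = ∫⁻ ω, 2 * (‖f ω‖ₑ ^ r + ‖g ω‖ₑ ^ r) ∂μ := by
    rw [eLpNorm_rpow_toReal_eq_lintegral hp0 hp_top, eLpNorm_rpow_toReal_eq_lintegral hp0 hp_top,
      lintegral_const_mul' _ _ ENNReal.ofNat_ne_top, lintegral_add_left' (hmeas hf)]
  have hae : (fun ω => ‖f ω + g ω‖ₑ ^ r + ‖f ω - g ω‖ₑ ^ r)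
      =ᵐ[μ] (fun ω => 2 * (‖f ω‖ₑ ^ r + ‖g ω‖ₑ ^ r)) ↔ ∀ᵐ ω ∂μ, f ω = 0 ∨ g ω = 0 :=
    Filter.eventually_congr (ae_of_all _ fun ω =>
      enorm_add_rpow_add_enorm_sub_rpow_eq_iff hr hp2 (f ω) (g ω))
  rw [hL, hR, ← hae]
  rcases hp2.lt_or_gt with hlt | hgt
  · refine lintegral_eq_lintegral_iff_ae_eq_of_le
      (fun ω => enorm_add_rpow_add_enorm_sub_rpow_le hr.le hlt.le (f ω) (g ω))
      (hL ▸ ENNReal.add_ne_top.2 ⟨hfin (hf.add hg), hfin (hf.sub hg)⟩) ?_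
    exact aemeasurable_const.mul ((hmeas hf).add (hmeas hg))
  · rw [eq_comm, Filter.eventuallyEq_comm]
    refine lintegral_eq_lintegral_iff_ae_eq_of_le
      (fun ω => le_enorm_add_rpow_add_enorm_sub_rpow hgt.le (f ω) (g ω))
      (hR ▸ ENNReal.mul_ne_top ENNReal.ofNat_ne_top (ENNReal.add_ne_top.2 ⟨hfin hf, hfin hg⟩)) ?_
    exact (hmeas (hf.add hg)).add (hmeas (hf.sub hg))

end MeasureTheory

/-- Equality case of the (commutative) Clarkson inequality in `L^p(μ)`,
`0 < p < ∞`, `p ≠ 2`: equality holds iff `f · g = 0` almost everywhere. -/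
theorem clarkson_equality_iff_disjoint_supports
    {Ω : Type*} [MeasurableSpace Ω] (μ : Measure Ω)
    (p : ℝ≥0∞) (hp0 : 0 < p) (hp_top : p ≠ ∞) (hp2 : p.toReal ≠ 2)
    (f g : Ω → ℂ) (hf : MemLp f p μ) (hg : MemLp g p μ) :
    eLpNorm (f + g) p μ ^ p.toReal + eLpNorm (f - g) p μ ^ p.toReal
      = 2 * (eLpNorm f p μ ^ p.toReal + eLpNorm g p μ ^ p.toReal)
    ↔ (∀ᵐ ω ∂μ, f ω * g ω = 0) := by
  simp only [mul_eq_zero]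
  exact eLpNorm_add_rpow_add_eLpNorm_sub_rpow_eq_iff hp0.ne' hp_top hp2 hf hg
end

section
/- In a matrix algebra, the intersection of any family of 'corners' is a corner: for families of orthogonal projections (p_α) and (q_α) in M_n(ℂ), the intersection over α of the subspaces p_α M_n(ℂ) q_α equals (⋀ p_α) M_n(ℂ) (⋀ q_α), where ⋀ denotes the infimum of projections (projection onto the intersection of ranges). -/
open Matrix

/-- A hermitian idempotent (orthogonal projection) in `M_n(ℂ)`. -/
def IsProjection {n : ℕ} (p : Matrix (Fin n) (Fin n) ℂ) : Prop :=
  p.IsHermitian ∧ p * p = p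

/-- The corner `p M_n(ℂ) q`. -/
def corner {n : ℕ} (p q : Matrix (Fin n) (Fin n) ℂ) : Set (Matrix (Fin n) (Fin n) ℂ) :=
  {y | ∃ x, y = p * x * q}

/-! For idempotents `p`, `q` the corner `p M q` is the set of `y` with `p y = y = y q`. The
condition `p y = y` says that the range of `y` lies in the range of `p`, so it holds for every
`p_α` exactly when it holds for the projection onto the intersection of their ranges; for
hermitian `q`, taking adjoints turns `y q = y` into the same kind of condition on `yᴴ`. -/

namespace Matrix

variable {m k R : Type*} [Fintype m]

theorem mul_eq_self_iff_range_mulVecLin_le [Fintype k] [CommRing R] {p : Matrix m m R}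
    (hp : IsIdempotentElem p) {A : Matrix m k R} :
    p * A = A ↔ LinearMap.range A.mulVecLin ≤ LinearMap.range p.mulVecLin := by
  constructor
  · intro h
    rw [← h, mulVecLin_mul]
    exact LinearMap.range_comp_le_range _ _
  · intro h
    refine ext_iff_mulVec.mpr fun v => ?_
    obtain ⟨w, hw⟩ := h ⟨v, rfl⟩
    rw [mulVecLin_apply, mulVecLin_apply] at hw
    rw [← mulVec_mulVec, ← hw, mulVec_mulVec, hp.eq]

theorem forall_mul_eq_self_iff_of_range_eq_iInf [Fintype k] [CommRing R] {ι : Type*}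
    {p : ι → Matrix m m R} {P : Matrix m m R}
    (hp : ∀ α, IsIdempotentElem (p α)) (hP : IsIdempotentElem P)
    (hPrange : LinearMap.range P.mulVecLin = ⨅ α, LinearMap.range (p α).mulVecLin)
    (A : Matrix m k R) : (∀ α, p α * A = A) ↔ P * A = A := by
  simp only [mul_eq_self_iff_range_mulVecLin_le (hp _), mul_eq_self_iff_range_mulVecLin_le hP,
    hPrange, le_iInf_iff]

theorem mul_eq_self_iff_mul_conjTranspose_eq [Semiring R] [StarRing R] {q : Matrix m m R}
    (hq : q.IsHermitian) {A : Matrix k m R} : A * q = A ↔ q * Aᴴ = Aᴴ := by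
  rw [← conjTranspose_inj, conjTranspose_mul, hq.eq]

end Matrix

theorem mem_corner_iff {n : ℕ} {p q y : Matrix (Fin n) (Fin n) ℂ} (hp : IsIdempotentElem p)
    (hq : IsIdempotentElem q) : y ∈ corner p q ↔ p * y = y ∧ y * q = y := by
  constructor
  · rintro ⟨x, rfl⟩
    constructor
    · rw [← mul_assoc, ← mul_assoc, hp.eq]
    · rw [mul_assoc, hq.eq]
  · rintro ⟨hpy, hyq⟩
    exact ⟨y, by rw [hpy, hyq]⟩

/-- The intersection of any family of corners is a corner: it equals
`(⋀ p_α) M_n(ℂ) (⋀ q_α)`, where `⋀` denotes the orthogonal projection onto the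
intersection of ranges. -/
theorem iInter_corner_eq_corner_inf
    {n : ℕ} {ι : Type*} (p q : ι → Matrix (Fin n) (Fin n) ℂ)
    (hp : ∀ α, IsProjection (p α)) (hq : ∀ α, IsProjection (q α))
    (P Q : Matrix (Fin n) (Fin n) ℂ)
    (hP : IsProjection P) (hQ : IsProjection Q)
    (hPrange : LinearMap.range P.mulVecLin = ⨅ α, LinearMap.range (p α).mulVecLin)
    (hQrange : LinearMap.range Q.mulVecLin = ⨅ α, LinearMap.range (q α).mulVecLin) :
    ⋂ α, corner (p α) (q α) = corner P Q := by
  ext y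
  have hleft : (∀ α, p α * y = y) ↔ P * y = y :=
    forall_mul_eq_self_iff_of_range_eq_iInf (fun α => (hp α).2) hP.2 hPrange y
  have hright : (∀ α, y * q α = y) ↔ y * Q = y := by
    simpa only [mul_eq_self_iff_mul_conjTranspose_eq (hq _).1,
      mul_eq_self_iff_mul_conjTranspose_eq hQ.1] using
      forall_mul_eq_self_iff_of_range_eq_iInf (fun α => (hq α).2) hQ.2 hQrange yᴴ
  simp only [Set.mem_iInter, mem_corner_iff (hp _).2 (hq _).2, mem_corner_iff hP.2 hQ.2,
    forall_and, hleft, hright]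
end

section
/- A unital Jordan homomorphism between matrix algebras that is bijective is either an algebra isomorphism or an algebra anti-isomorphism: every linear bijection J : M_n(ℂ) → M_n(ℂ) with J(1) = 1 and J(xy + yx) = J(x)J(y) + J(y)J(x) for all x, y satisfies either J(xy) = J(x)J(y) for all x, y, or J(xy) = J(y)J(x) for all x, y. -/
/-!
Herstein's argument. Expanding `f ((x + y) * z * (x + y))` shows that a Jordan homomorphism
preserves the symmetric triple product `x z y + y z x`; applied to `(x y) t (y x) + (y x) t (x y)`
this makes the defects `a = f (x y) - f x f y` and `b = f (x y) - f y f x` satisfy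
`a t b + b t a = 0` for every `t` in the (surjective) image. In a prime ring without
`2`-torsion this forces `a = 0` or `b = 0`. Both defects are biadditive in `(x, y)`, and a group
is not the union of two proper subgroups, so one of them vanishes identically.
-/

def IsPrimeRing (R : Type*) [Ring R] : Prop :=
  ∀ a b : R, (∀ t, a * t * b = 0) → a = 0 ∨ b = 0

section PrimeRing

variable {R : Type*} [Ring R]

theorem IsPrimeRing.of_subsingleton [Subsingleton R] : IsPrimeRing R :=
  fun a _ _ => Or.inl (Subsingleton.elim a 0)

theorem IsSimpleRing.isPrimeRing [IsSimpleRing R] : IsPrimeRing R := by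
  intro a b h
  let I : TwoSidedIdeal R := .mk' {x | ∀ s t, s * x * t * b = 0}
    (by simp) (fun hx hy s t => by simp [mul_add, add_mul, hx s t, hy s t])
    (fun hx s t => by simp [hx s t]) (fun hy s t => by simpa [mul_assoc] using hy (s * _) t)
    (fun hx s t => by simpa [mul_assoc] using hx s (_ * t))
  have haI : a ∈ I := fun s t => by simp [mul_assoc, h t]
  rcases eq_bot_or_eq_top I with hI | hI
  · exact Or.inl ((TwoSidedIdeal.mem_bot R).1 (hI ▸ haI))
  · exact Or.inr (by simpa using (hI ▸ TwoSidedIdeal.mem_top R : (1 : R) ∈ I) 1 1)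

theorem Matrix.isPrimeRing (ι : Type*) [Fintype ι] [DecidableEq ι] [IsSimpleRing R] :
    IsPrimeRing (Matrix ι ι R) := by
  cases isEmpty_or_nonempty ι
  · exact .of_subsingleton
  · exact IsSimpleRing.isPrimeRing

theorem IsPrimeRing.eq_zero_or_eq_zero_of_mul_mul_add_mul_mul_eq_zero [IsAddTorsionFree R]
    (hR : IsPrimeRing R) {a b : R} (h : ∀ t, a * t * b + b * t * a = 0) : a = 0 ∨ b = 0 := by
  have hab (t : R) : a * t * b = -(b * t * a) := eq_neg_of_add_eq_zero_left (h t)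
  -- the hypothesis at `t * a * s`, with `b` moved to the front in its first term
  have hbaa (t s : R) : b * t * (a * s * a) = 0 := by
    have key := h (t * a * s)
    have : a * (t * a * s) * b = b * t * (a * s * a) := by
      calc a * (t * a * s) * b = a * t * (a * s * b) := by noncomm_ring
        _ = -(a * t * b * (s * a)) := by rw [hab s]; noncomm_ring
        _ = b * t * (a * s * a) := by rw [hab t]; noncomm_ring
    rw [this, show b * (t * a * s) * a = b * t * (a * s * a) by noncomm_ring, ← two_nsmul,
      ← nsmul_zero 2, nsmul_right_inj two_ne_zero] at key
    exact key
  by_cases hb : b = 0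
  · exact Or.inr hb
  · have haa (s : R) : a * s * a = 0 := (hR b _ (hbaa · s)).resolve_left hb
    exact Or.inl ((hR a a haa).elim id id)

end PrimeRing

theorem AddMonoidHom.eq_zero_or_eq_zero_of_forall {M N : Type*} [AddZeroClass M]
    [AddZeroClass N] {δ₁ δ₂ : M →+ N} (h : ∀ x, δ₁ x = 0 ∨ δ₂ x = 0) : δ₁ = 0 ∨ δ₂ = 0 := by
  by_contra! hne
  obtain ⟨⟨x₁, hx₁⟩, ⟨x₂, hx₂⟩⟩ : (∃ x, δ₁ x ≠ 0) ∧ ∃ x, δ₂ x ≠ 0 := by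
    simpa [DFunLike.ext_iff] using hne
  have h₁ : δ₁ x₂ = 0 := (h x₂).resolve_right hx₂
  have h₂ : δ₂ x₁ = 0 := (h x₁).resolve_left hx₁
  rcases h (x₁ + x₂) with h | h
  · exact hx₁ (by simpa [h₁] using h)
  · exact hx₂ (by simpa [h₂] using h)

section Jordan

variable {R S : Type*} [Ring R] [Ring S] [IsAddTorsionFree S] {f : R →+ S}

theorem map_mul_self_of_jordan (hf : ∀ x y, f (x * y + y * x) = f x * f y + f y * f x)
    (x : R) : f (x * x) = f x * f x := by
  have := hf x x
  rwa [map_add, ← two_nsmul, ← two_nsmul, nsmul_right_inj two_ne_zero] at this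

theorem map_mul_mul_self_of_jordan (hf : ∀ x y, f (x * y + y * x) = f x * f y + f y * f x)
    (x y : R) : f (x * y * x) = f x * f y * f x := by
  have h := hf x (x * y + y * x)
  rw [show x * (x * y + y * x) + (x * y + y * x) * x
      = (x * x * y + y * (x * x)) + 2 • (x * y * x) by noncomm_ring,
    map_add, hf, map_mul_self_of_jordan hf, map_nsmul, hf,
    show f x * (f x * f y + f y * f x) + (f x * f y + f y * f x) * f x
      = (f x * f x * f y + f y * (f x * f x)) + 2 • (f x * f y * f x) by noncomm_ring,
    add_left_cancel_iff, nsmul_right_inj two_ne_zero] at h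
  exact h

theorem map_mul_mul_add_mul_mul_of_jordan
    (hf : ∀ x y, f (x * y + y * x) = f x * f y + f y * f x) (x y z : R) :
    f (x * z * y + y * z * x) = f x * f z * f y + f y * f z * f x := by
  have h := map_mul_mul_self_of_jordan hf (x + y) z
  rw [show (x + y) * z * (x + y) = x * z * x + (x * z * y + y * z * x) + y * z * y by
      noncomm_ring, map_add f (x * z * x + _), map_add f (x * z * x),
    map_mul_mul_self_of_jordan hf x, map_mul_mul_self_of_jordan hf y, map_add f x y,
    show (f x + f y) * f z * (f x + f y)
      = f x * f z * f x + (f x * f z * f y + f y * f z * f x) + f y * f z * f y by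
      noncomm_ring] at h
  exact add_left_cancel (add_right_cancel h)

theorem jordan_defect_sandwich (hf : ∀ x y, f (x * y + y * x) = f x * f y + f y * f x)
    (x y t : R) :
    (f (x * y) - f x * f y) * f t * (f (x * y) - f y * f x)
      + (f (x * y) - f y * f x) * f t * (f (x * y) - f x * f y) = 0 := by
  have h := map_mul_mul_add_mul_mul_of_jordan hf (x * y) (y * x) t
  have hyx : f (y * x) = f x * f y + f y * f x - f (x * y) := by
    rw [← hf, map_add, add_sub_cancel_left]
  rw [show x * y * t * (y * x) + y * x * t * (x * y) = x * (y * t * y) * x + y * (x * t * x) * y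
      by noncomm_ring, map_add, map_mul_mul_self_of_jordan hf, map_mul_mul_self_of_jordan hf,
    map_mul_mul_self_of_jordan hf, map_mul_mul_self_of_jordan hf, hyx] at h
  rw [← sub_eq_zero.2 h]
  noncomm_ring

theorem map_mul_sub_eq_zero_or_of_jordan (hf : ∀ x y, f (x * y + y * x) = f x * f y + f y * f x)
    (hS : IsPrimeRing S) (hsurj : Function.Surjective f) (x y : R) :
    f (x * y) - f x * f y = 0 ∨ f (x * y) - f y * f x = 0 :=
  hS.eq_zero_or_eq_zero_of_mul_mul_add_mul_mul_eq_zero fun t => by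
    obtain ⟨s, rfl⟩ := hsurj t
    exact jordan_defect_sandwich hf x y s

theorem jordan_hom_mul_or_antimul (hf : ∀ x y, f (x * y + y * x) = f x * f y + f y * f x)
    (hS : IsPrimeRing S) (hsurj : Function.Surjective f) :
    (∀ x y, f (x * y) = f x * f y) ∨ ∀ x y, f (x * y) = f y * f x := by
  let μ : R →+ R →+ S := AddMonoidHom.mul.compr₂ f
  let ν : R →+ R →+ S := (AddMonoidHom.mul.comp f).compl₂ f
  have key := AddMonoidHom.eq_zero_or_eq_zero_of_forall (δ₁ := μ - ν) (δ₂ := μ - ν.flip)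
    fun x => AddMonoidHom.eq_zero_or_eq_zero_of_forall fun y => by
      simpa [μ, ν] using map_mul_sub_eq_zero_or_of_jordan hf hS hsurj x y
  simpa [DFunLike.ext_iff, sub_eq_zero, μ, ν] using key

end Jordan

open Matrix

theorem jordan_bijection_mul_or_antimul_general
    {n : ℕ} (J : Matrix (Fin n) (Fin n) ℂ →ₗ[ℂ] Matrix (Fin n) (Fin n) ℂ)
    (hbij : Function.Bijective J)
    (hjordan : ∀ x y : Matrix (Fin n) (Fin n) ℂ,
      J (x * y + y * x) = J x * J y + J y * J x) :
    (∀ x y : Matrix (Fin n) (Fin n) ℂ, J (x * y) = J x * J y) ∨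
    (∀ x y : Matrix (Fin n) (Fin n) ℂ, J (x * y) = J y * J x) :=
  have : IsAddTorsionFree (Matrix (Fin n) (Fin n) ℂ) := .of_module_rat _
  jordan_hom_mul_or_antimul (f := J.toAddMonoidHom) hjordan (Matrix.isPrimeRing _)
    hbij.surjective

/-- A unital bijective Jordan homomorphism of `M_n(ℂ)` is multiplicative or
antimultiplicative. -/
theorem jordan_bijection_mul_or_antimul
    {n : ℕ} (J : Matrix (Fin n) (Fin n) ℂ →ₗ[ℂ] Matrix (Fin n) (Fin n) ℂ)
    (hbij : Function.Bijective J)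
    (hunital : J 1 = 1)
    (hjordan : ∀ x y : Matrix (Fin n) (Fin n) ℂ,
      J (x * y + y * x) = J x * J y + J y * J x) :
    (∀ x y : Matrix (Fin n) (Fin n) ℂ, J (x * y) = J x * J y) ∨
    (∀ x y : Matrix (Fin n) (Fin n) ℂ, J (x * y) = J y * J x) :=
  jordan_bijection_mul_or_antimul_general J hbij hjordan
end

section
/- Let π : A → B be a bijective map between the self-adjoint idempotents (projections) of two commutative C*-algebras (or Boolean algebras of idempotents) that preserves order and orthogonality in both directions, and is additive on orthogonal projections. Then π extends uniquely to a ring isomorphism of the generated Boolean algebras. -/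
/-- An orthoisomorphism between Boolean algebras (a bijection preserving
disjointness in both directions and additive on disjoint elements) is a
Boolean algebra isomorphism: it preserves meets, joins, complements and order. -/
theorem orthoisomorphism_is_boolean_isomorphism
    {A B : Type*} [BooleanAlgebra A] [BooleanAlgebra B]
    (π : A → B) (hbij : Function.Bijective π)
    (horth : ∀ e f : A, e ⊓ f = ⊥ ↔ π e ⊓ π f = ⊥)
    (hadd : ∀ e f : A, e ⊓ f = ⊥ → π (e ⊔ f) = π e ⊔ π f) :
    (∀ e f : A, π (e ⊓ f) = π e ⊓ π f) ∧
    (∀ e f : A, π (e ⊔ f) = π e ⊔ π f) ∧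
    (∀ e : A, π eᶜ = (π e)ᶜ) ∧
    (∀ e f : A, e ≤ f ↔ π e ≤ π f) := by
  obtain ⟨hinj, hsurj⟩ := hbij
  have hbot : π ⊥ = ⊥ := by
    have h := (horth ⊥ ⊥).mp (by simp)
    simpa using h
  have htop : π ⊤ = ⊤ := by
    obtain ⟨a, ha⟩ := hsurj (π ⊤)ᶜ
    have h1 : π a ⊓ π ⊤ = ⊥ := by rw [ha]; simp
    have h2 : a ⊓ ⊤ = ⊥ := (horth a ⊤).mpr h1
    have ha0 : a = ⊥ := by simpa using h2
    have h3 : (π ⊤)ᶜ = ⊥ := by rw [← ha, ha0, hbot]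
    exact compl_eq_bot.mp h3
  have hcompl : ∀ e : A, π eᶜ = (π e)ᶜ := by
    intro e
    have hd : π eᶜ ⊓ π e = ⊥ := (horth eᶜ e).mp (by simp)
    have hs : π eᶜ ⊔ π e = ⊤ := by
      have := hadd eᶜ e (by simp)
      rw [compl_sup_eq_top, htop] at this
      exact this.symm
    exact (IsCompl.of_eq hd hs).eq_compl
  have hle : ∀ e f : A, e ≤ f ↔ π e ≤ π f := by
    intro e f
    have h1 : e ≤ f ↔ e ⊓ fᶜ = ⊥ := by
      rw [← sdiff_eq, sdiff_eq_bot_iff]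
    have h2 : π e ≤ π f ↔ π e ⊓ (π f)ᶜ = ⊥ := by
      rw [← sdiff_eq, sdiff_eq_bot_iff]
    rw [h1, h2, horth e fᶜ, hcompl f]
  have hsup : ∀ e f : A, π (e ⊔ f) = π e ⊔ π f := by
    intro e f
    apply le_antisymm
    · obtain ⟨g, hg⟩ := hsurj (π e ⊔ π f)
      have he : e ≤ g := (hle e g).mpr (by rw [hg]; exact le_sup_left)
      have hf : f ≤ g := (hle f g).mpr (by rw [hg]; exact le_sup_right)
      have := (hle (e ⊔ f) g).mp (sup_le he hf)
      rwa [hg] at this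
    · exact sup_le ((hle e (e ⊔ f)).mp le_sup_left)
        ((hle f (e ⊔ f)).mp le_sup_right)
  have hinf : ∀ e f : A, π (e ⊓ f) = π e ⊓ π f := by
    intro e f
    have : e ⊓ f = (eᶜ ⊔ fᶜ)ᶜ := by simp
    rw [this, hcompl, hsup, hcompl, hcompl, compl_sup, compl_compl, compl_compl]
  exact ⟨hinf, hsup, hcompl, hle⟩
end
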